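/- Separation of inexecutabilities per action in K: if S, I ⊨_K A → [a]⊥ where I = ⋃_{a'} I_{a'} is a union of inexecutability laws and S is a set of classical formulas, then already S, I_a ⊨_K A → [a]⊥; equivalently, inexecutability laws for actions other than a are irrelevant for deriving inexecutabilities of a. -/

import Mathlib

/-! Classical propositional formulas. -/
inductive PForm (α : Type) : Type
  | atom : α → PForm α
  | fls  : PForm α
  | not  : PForm α → PForm α
  | and  : PForm α → PForm α → PForm α
  | or   : PForm α → PForm α → PForm α
  | imp  : PForm α → PForm α → PForm α

def PForm.Sat {α : Type} (v : α → Prop) : PForm α → Prop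
  | atom p => v p
  | fls => False
  | not φ => ¬ Sat v φ
  | and φ ψ => Sat v φ ∧ Sat v ψ
  | or φ ψ => Sat v φ ∨ Sat v ψ
  | imp φ ψ => Sat v φ → Sat v ψ

/-- Classical (propositional) global consequence. -/
def EntailsCl {α : Type} (Γ : Set (PForm α)) (φ : PForm α) : Prop :=
  ∀ v : α → Prop, (∀ ψ ∈ Γ, PForm.Sat v ψ) → PForm.Sat v φ

/-- Multimodal formulas with one box per action. -/
inductive MForm (Act α : Type) : Type
  | atom : α → MForm Act α
  | fls  : MForm Act α
  | not  : MForm Act α → MForm Act α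
  | and  : MForm Act α → MForm Act α → MForm Act α
  | or   : MForm Act α → MForm Act α → MForm Act α
  | imp  : MForm Act α → MForm Act α → MForm Act α
  | box  : Act → MForm Act α → MForm Act α

def PForm.toM {Act α : Type} : PForm α → MForm Act α
  | .atom p => .atom p
  | .fls => .fls
  | .not φ => .not φ.toM
  | .and φ ψ => .and φ.toM ψ.toM
  | .or φ ψ => .or φ.toM ψ.toM
  | .imp φ ψ => .imp φ.toM ψ.toM

/-- A Kripke model for multimodal K. -/
structure KModel (Act α : Type) where
  W : Type
  R : Act → W → W → Prop
  V : W → α → Prop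

def MForm.Sat {Act α : Type} (M : KModel Act α) : M.W → MForm Act α → Prop
  | w, atom p => M.V w p
  | _, fls => False
  | w, not φ => ¬ Sat M w φ
  | w, and φ ψ => Sat M w φ ∧ Sat M w ψ
  | w, or φ ψ => Sat M w φ ∨ Sat M w ψ
  | w, imp φ ψ => Sat M w φ → Sat M w ψ
  | w, box a φ => ∀ w', M.R a w w' → Sat M w' φ

/-- Global truth in a model. -/
def Glob {Act α : Type} (M : KModel Act α) (Φ : MForm Act α) : Prop :=
  ∀ w : M.W, MForm.Sat M w Φ

/-- Global consequence in multimodal K. -/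
def ConsK {Act α : Type} (Γ : Set (MForm Act α)) (Φ : MForm Act α) : Prop :=
  ∀ M : KModel Act α, (∀ Ψ ∈ Γ, Glob M Ψ) → Glob M Φ

/-- Literals. -/
abbrev Lit (α : Type) := α × Bool

def Lit.Sat {α : Type} (v : α → Prop) (l : Lit α) : Prop :=
  if l.2 then v l.1 else ¬ v l.1

/-- A dependence relation `⇝ ⊆ Act × Lit`. -/
abbrev Dep (Act α : Type) := Act → Lit α → Prop

/-- `⇝`-models: along `R a`, literals independent of `a` persist. -/
def IsDepModel {Act α : Type} (dep : Dep Act α) (M : KModel Act α) : Prop :=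
  ∀ (a : Act) (w w' : M.W), M.R a w w' → ∀ p : α,
    (¬ dep a (p, true) → ¬ M.V w p → ¬ M.V w' p) ∧
    (¬ dep a (p, false) → M.V w p → M.V w' p)

/-- Dependence-based global consequence. -/
def ConsDep {Act α : Type} (dep : Dep Act α) (Γ : Set (MForm Act α)) (Φ : MForm Act α) : Prop :=
  ∀ M : KModel Act α, IsDepModel dep M → (∀ Ψ ∈ Γ, Glob M Ψ) → Glob M Φ

/-- An action theory: static laws `S`, effect laws `E` (antecedent/consequent
pairs), executability laws `X` (antecedents), inexecutability laws `I`
(antecedents). -/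
structure ActionTheory (Act α : Type) where
  S : Set (PForm α)
  E : Act → Set (PForm α × PForm α)
  X : Act → Set (PForm α)
  I : Act → Set (PForm α)

/-- `⟨a⟩Φ`. -/
def MForm.diam {Act α : Type} (a : Act) (Φ : MForm Act α) : MForm Act α :=
  .not (.box a (.not Φ))

/-- Effect law `A → [a]C`. -/
def effLaw {Act α : Type} (a : Act) (e : PForm α × PForm α) : MForm Act α :=
  .imp e.1.toM (.box a e.2.toM)

/-- Executability law `A → ⟨a⟩⊤`. -/
def exeLaw {Act α : Type} (a : Act) (A : PForm α) : MForm Act α :=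
  .imp A.toM (MForm.diam a (.not .fls))

/-- Inexecutability law `A → [a]⊥`. -/
def inexLaw {Act α : Type} (a : Act) (A : PForm α) : MForm Act α :=
  .imp A.toM (.box a .fls)

variable {Act α : Type}

def staticForms (T : ActionTheory Act α) : Set (MForm Act α) := PForm.toM '' T.S
def effForms (T : ActionTheory Act α) (a : Act) : Set (MForm Act α) := effLaw a '' T.E a
def exeForms (T : ActionTheory Act α) (a : Act) : Set (MForm Act α) := exeLaw a '' T.X a
def inexForms (T : ActionTheory Act α) (a : Act) : Set (MForm Act α) := inexLaw a '' T.I a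

/-- The action theory of the single action `a`:  `S ∪ E_a ∪ X_a ∪ I_a`. -/
def formsFor (T : ActionTheory Act α) (a : Act) : Set (MForm Act α) :=
  staticForms T ∪ effForms T a ∪ exeForms T a ∪ inexForms T a

/-- The whole action theory:  `S ∪ E ∪ X ∪ I`. -/
def allForms (T : ActionTheory Act α) : Set (MForm Act α) :=
  staticForms T ∪ (⋃ a, effForms T a) ∪ (⋃ a, exeForms T a) ∪ (⋃ a, inexForms T a)

/-- Postulate PS for action `a`: no implicit static laws. -/
def PS (T : ActionTheory Act α) (dep : Dep Act α) (a : Act) : Prop :=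
  ∀ φ : PForm α, ConsDep dep (formsFor T a) φ.toM → EntailsCl T.S φ

/-- Postulate PS*: no implicit static laws for the whole theory. -/
def PSstar (T : ActionTheory Act α) (dep : Dep Act α) : Prop :=
  ∀ φ : PForm α, ConsDep dep (allForms T) φ.toM → EntailsCl T.S φ

/-- Postulate PI for action `a`: no implicit inexecutability laws. -/
def PIpost (T : ActionTheory Act α) (dep : Dep Act α) (a : Act) : Prop :=
  ∀ A : PForm α, ConsDep dep (formsFor T a) (inexLaw a A) →
    ConsK (staticForms T ∪ inexForms T a) (inexLaw a A)

/-- Postulate PI*: no implicit inexecutability laws for the whole theory. -/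
def PIstar (T : ActionTheory Act α) (dep : Dep Act α) : Prop :=
  ∀ (a : Act) (A : PForm α), ConsDep dep (allForms T) (inexLaw a A) →
    ConsK (staticForms T ∪ ⋃ a', inexForms T a') (inexLaw a A)

theorem PForm.sat_toM (M : KModel Act α) (w : M.W) (φ : PForm α) :
    MForm.Sat M w (φ.toM (Act := Act)) ↔ φ.Sat (M.V w) := by
  induction φ with
  | atom p => rfl
  | fls => rfl
  | not φ ih => simp only [PForm.toM, MForm.Sat, PForm.Sat, ih]
  | and φ ψ ih₁ ih₂ => simp only [PForm.toM, MForm.Sat, PForm.Sat, ih₁, ih₂]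
  | or φ ψ ih₁ ih₂ => simp only [PForm.toM, MForm.Sat, PForm.Sat, ih₁, ih₂]
  | imp φ ψ ih₁ ih₂ => simp only [PForm.toM, MForm.Sat, PForm.Sat, ih₁, ih₂]

namespace KModel

def restrictAct (M : KModel Act α) (a : Act) : KModel Act α where
  W := M.W
  R b w w' := b = a ∧ M.R a w w'
  V := M.V

variable (M : KModel Act α) (a : Act)

theorem glob_toM_restrictAct_iff (φ : PForm α) :
    Glob (M.restrictAct a) φ.toM ↔ Glob M φ.toM :=
  forall_congr' fun w => (φ.sat_toM (M.restrictAct a) w).trans (φ.sat_toM M w).symm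

theorem glob_inexLaw_restrictAct_self_iff (B : PForm α) :
    Glob (M.restrictAct a) (inexLaw a B) ↔ Glob M (inexLaw a B) := by
  simp only [Glob, inexLaw, MForm.Sat, PForm.sat_toM]
  exact forall_congr' fun w => imp_congr_right fun _ =>
    ⟨fun h w' hR => h w' ⟨rfl, hR⟩, fun h w' hR => h w' hR.2⟩

theorem glob_inexLaw_restrictAct_of_ne {b : Act} (hb : b ≠ a) (B : PForm α) :
    Glob (M.restrictAct a) (inexLaw b B) :=
  fun _ _ _ hR => hb hR.1

end KModel

theorem stmt_14_general (T : ActionTheory Act α) (a : Act) (A : PForm α)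
    (h : ConsK (staticForms T ∪ ⋃ a', inexForms T a') (inexLaw a A)) :
    ConsK (staticForms T ∪ inexForms T a) (inexLaw a A) := by
  intro M hM
  rw [← M.glob_inexLaw_restrictAct_self_iff a]
  refine h _ ?_
  rintro _ (⟨φ, hφ, rfl⟩ | hΨ)
  · exact (M.glob_toM_restrictAct_iff a φ).2 (hM _ (Or.inl ⟨φ, hφ, rfl⟩))
  obtain ⟨b, B, hB, rfl⟩ := Set.mem_iUnion.1 hΨ
  obtain rfl | hb := eq_or_ne b a
  · exact (M.glob_inexLaw_restrictAct_self_iff b B).2 (hM _ (Or.inr ⟨B, hB, rfl⟩))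
  · exact M.glob_inexLaw_restrictAct_of_ne a hb B

/-- inexecutability laws for actions other than `a` are
irrelevant for deriving inexecutabilities of `a` in K. -/
theorem stmt_14 [Fintype Act] [Fintype α] (T : ActionTheory Act α) (a : Act) (A : PForm α)
    (h : ConsK (staticForms T ∪ ⋃ a', inexForms T a') (inexLaw a A)) :
    ConsK (staticForms T ∪ inexForms T a) (inexLaw a A) :=
  stmt_14_general T a A h
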